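/- arXiv:2505.20022 — 3 statements merged into one kernel-verified Lean document; each statement's English description precedes it below -/
import Mathlib

section
/- Suppose the eigenvalue sequence satisfies μ_j ≤ C j^{-2α} for all j ≥ 1 with α > 1/2. Then the kernel complexity R(δ)² = n^{-1} Σ_{j=1}^∞ min{δ, μ_j} satisfies R(δ)² ≤ C_α δ^{(2α-1)/(2α)}/n for all 0 < δ ≤ 1/√n, where C_α depends only on C and α; consequently the fixed point δ_n of R satisfies δ_n ≤ C'_α n^{-2α/(2α+1)}. -/
/-!
Split `∑ min δ μⱼ` at `d ≈ δ^(-1/(2α))`: the first `d` terms contribute at most `d δ`, and the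
tail at most `C ∑_{j>d} j^(-2α) ≤ C d^(1-2α) / (2α-1)` by comparison with an integral; both are
of order `δ^((2α-1)/(2α))`. At a fixed point `n δ² = ∑ min δ μⱼ ≤ K δ^((2α-1)/(2α))`, so
`δ^((2α+1)/(2α)) ≤ K / n`. Since `μ₀` is unconstrained, a fixed point `δ ≥ 1` is handled by the
cruder bound `∑ min δ μⱼ ≤ K δ`, which gives `δ ≤ K / n`.
-/

open Finset

section RpowDecay

variable {C p : ℝ}

lemma sum_range_rpow_neg_le (hp : 1 < p) {x : ℝ} (hx : 0 < x) (m : ℕ) :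
    ∑ i ∈ range m, (x + (i + 1 : ℕ)) ^ (-p) ≤ x ^ (1 - p) / (p - 1) := by
  have hanti : AntitoneOn (fun y : ℝ => y ^ (-p)) (Set.Icc x (x + m)) :=
    fun a ha b _ hab => Real.rpow_le_rpow_of_nonpos (hx.trans_le ha.1) hab (by linarith)
  have hint : ∫ y in x..(x + m), y ^ (-p) = (x ^ (1 - p) - (x + m) ^ (1 - p)) / (p - 1) := by
    rw [integral_rpow (Or.inr ⟨by linarith, fun h => by
      rw [Set.uIcc_of_le (by simp)] at h; linarith [h.1]⟩)]
    rw [div_eq_div_iff (by linarith) (by linarith)]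
    ring_nf
  calc ∑ i ∈ range m, (x + (i + 1 : ℕ)) ^ (-p) ≤ ∫ y in x..(x + m), y ^ (-p) :=
        hanti.sum_le_integral
    _ ≤ x ^ (1 - p) / (p - 1) := by
        rw [hint]
        gcongr
        exact sub_le_self _ (Real.rpow_nonneg (by positivity) _)

lemma tsum_nat_add_le_of_le_rpow (hp : 1 < p) (hC : 0 ≤ C) {a : ℕ → ℝ} (ha : ∀ j, 0 ≤ a j)
    (hdecay : ∀ j : ℕ, 1 ≤ j → a j ≤ C * (j : ℝ) ^ (-p)) {d : ℕ} (hd : 1 ≤ d) :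
    ∑' j, a (j + (d + 1)) ≤ C / (p - 1) * (d : ℝ) ^ (1 - p) := by
  refine Real.tsum_le_of_sum_range_le (fun j => ha _) fun m => ?_
  have hterm : ∀ j : ℕ, a (j + (d + 1)) ≤ C * ((d : ℝ) + (j + 1 : ℕ)) ^ (-p) := fun j => by
    have := hdecay (j + (d + 1)) (by omega)
    push_cast at this ⊢
    convert this using 3; ring
  calc ∑ j ∈ range m, a (j + (d + 1)) ≤ C * ∑ j ∈ range m, ((d : ℝ) + (j + 1 : ℕ)) ^ (-p) := by
        rw [mul_sum]; exact sum_le_sum fun j _ => hterm j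
    _ ≤ C * ((d : ℝ) ^ (1 - p) / (p - 1)) :=
        mul_le_mul_of_nonneg_left
          (sum_range_rpow_neg_le hp (by exact_mod_cast hd) m) hC
    _ = C / (p - 1) * (d : ℝ) ^ (1 - p) := by ring

variable {μ : ℕ → ℝ}

lemma tsum_min_le_of_le_rpow (hp : 1 < p) (hC : 0 ≤ C) (hμ0 : ∀ j, 0 ≤ μ j) (hμ : Summable μ)
    (hdecay : ∀ j : ℕ, 1 ≤ j → μ j ≤ C * (j : ℝ) ^ (-p)) {δ : ℝ} (hδ : 0 ≤ δ) {d : ℕ}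
    (hd : 1 ≤ d) :
    ∑' j, min δ (μ j) ≤ (d + 1) * δ + C / (p - 1) * (d : ℝ) ^ (1 - p) := by
  have hsum : Summable fun j => min δ (μ j) :=
    hμ.of_nonneg_of_le (fun j => le_min hδ (hμ0 j)) fun j => min_le_right _ _
  have hhead : ∑ j ∈ range (d + 1), min δ (μ j) ≤ (d + 1) * δ := by
    simpa using sum_le_card_nsmul (range (d + 1)) _ δ fun j _ => min_le_left δ (μ j)
  have htail := tsum_nat_add_le_of_le_rpow hp hC (fun j => le_min hδ (hμ0 j))
    (fun j hj => (min_le_right _ _).trans (hdecay j hj)) hd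
  rw [← hsum.sum_add_tsum_nat_add (d + 1)]
  exact add_le_add hhead htail

/-- The cutoff `d = ⌈δ^(-1/p)⌉` balances the head `d δ` against the tail `d^(1-p)`. -/
lemma tsum_min_le_rpow (hp : 1 < p) (hC : 0 ≤ C) (hμ0 : ∀ j, 0 ≤ μ j) (hμ : Summable μ)
    (hdecay : ∀ j : ℕ, 1 ≤ j → μ j ≤ C * (j : ℝ) ^ (-p)) {δ : ℝ} (hδ : 0 < δ) (hδ1 : δ ≤ 1) :
    ∑' j, min δ (μ j) ≤ (3 + C / (p - 1)) * δ ^ ((p - 1) / p) := by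
  have hp0 : 0 < p := by linarith
  set t := δ ^ (-p⁻¹) with ht
  have ht0 : 0 < t := Real.rpow_pos_of_pos hδ _
  set d := ⌈t⌉₊
  have hd : 1 ≤ d := Nat.one_le_ceil_iff.2 ht0
  have htd : t ≤ d := Nat.le_ceil t
  have hdt : (d : ℝ) ≤ t + 1 := (Nat.ceil_lt_add_one ht0.le).le
  have htδ : t * δ = δ ^ ((p - 1) / p) := by
    rw [ht, ← Real.rpow_add_one hδ.ne']; congr 1; field_simp; ring
  have hδθ : δ ≤ δ ^ ((p - 1) / p) :=
    Real.self_le_rpow_of_le_one hδ.le hδ1 (div_le_one_of_le₀ (by linarith) hp0.le)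
  have hhead : ((d : ℝ) + 1) * δ ≤ 3 * δ ^ ((p - 1) / p) := by nlinarith
  have htail : (d : ℝ) ^ (1 - p) ≤ δ ^ ((p - 1) / p) := calc
    (d : ℝ) ^ (1 - p) ≤ t ^ (1 - p) := Real.rpow_le_rpow_of_nonpos ht0 htd (by linarith)
    _ = δ ^ ((p - 1) / p) := by rw [ht, ← Real.rpow_mul hδ.le]; congr 1; field_simp; ring
  calc ∑' j, min δ (μ j) ≤ (d + 1) * δ + C / (p - 1) * (d : ℝ) ^ (1 - p) :=
        tsum_min_le_of_le_rpow hp hC hμ0 hμ hdecay hδ.le hd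
    _ ≤ 3 * δ ^ ((p - 1) / p) + C / (p - 1) * δ ^ ((p - 1) / p) := by
        gcongr
    _ = (3 + C / (p - 1)) * δ ^ ((p - 1) / p) := by ring

lemma tsum_min_le_mul (hp : 1 < p) (hC : 0 ≤ C) (hμ0 : ∀ j, 0 ≤ μ j) (hμ : Summable μ)
    (hdecay : ∀ j : ℕ, 1 ≤ j → μ j ≤ C * (j : ℝ) ^ (-p)) {δ : ℝ} (hδ : 1 ≤ δ) :
    ∑' j, min δ (μ j) ≤ (3 + C / (p - 1)) * δ := by
  have hCp : 0 ≤ C / (p - 1) := div_nonneg hC (by linarith)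
  have := tsum_min_le_of_le_rpow hp hC hμ0 hμ hdecay (zero_le_one.trans hδ) le_rfl
  norm_num at this
  nlinarith

end RpowDecay

section FixedPoint

variable {x K n q : ℝ}

lemma le_mul_rpow_neg_of_mul_sq_le_mul_rpow (hx : 0 < x) (hn : 1 ≤ n) (hK : 1 ≤ K)
    (hq0 : 0 < q) (hq1 : q ≤ 1) (h : n * x ^ 2 ≤ K * x ^ (2 - q⁻¹)) :
    x ≤ K * n ^ (-q) := by
  have hn0 : 0 < n := by linarith
  have hxq : x ^ q⁻¹ ≤ K / n := by
    have hsplit : x ^ 2 = x ^ q⁻¹ * x ^ (2 - q⁻¹) := by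
      rw [← Real.rpow_add hx, add_sub_cancel, Real.rpow_two]
    rw [le_div_iff₀ hn0]
    refine le_of_mul_le_mul_right ?_ (Real.rpow_pos_of_pos hx (2 - q⁻¹))
    nlinarith
  calc x = (x ^ q⁻¹) ^ q := by rw [← Real.rpow_mul hx.le, inv_mul_cancel₀ hq0.ne', Real.rpow_one]
    _ ≤ (K / n) ^ q := Real.rpow_le_rpow (by positivity) hxq hq0.le
    _ = K ^ q * n ^ (-q) := by
        rw [Real.div_rpow (by linarith) hn0.le, Real.rpow_neg hn0.le, div_eq_mul_inv]
    _ ≤ K * n ^ (-q) := by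
        gcongr
        exact Real.rpow_le_self_of_one_le hK hq1

lemma le_mul_rpow_neg_of_mul_sq_le_mul (hx : 0 < x) (hn : 1 ≤ n) (hK : 0 ≤ K) (hq1 : q ≤ 1)
    (h : n * x ^ 2 ≤ K * x) : x ≤ K * n ^ (-q) := by
  have hn0 : 0 < n := by linarith
  calc x ≤ K * n ^ (-1 : ℝ) := by
        rw [Real.rpow_neg_one, ← div_eq_mul_inv, le_div_iff₀ hn0]; nlinarith
    _ ≤ K * n ^ (-q) := by gcongr

end FixedPoint

/-- Polynomially decaying eigenvalues: if `μ j ≤ C j^(-2α)` for all `j ≥ 1` with `α > 1/2`,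
then the kernel complexity `R(δ)² = n⁻¹ ∑ min δ (μ j)` satisfies
`R(δ)² ≤ Cα δ^((2α-1)/(2α)) / n` for all `0 < δ ≤ 1/√n`, where `Cα` depends only on
`C` and `α`; consequently any positive fixed point `δₙ` of `R` satisfies
`δₙ ≤ C'α n^(-2α/(2α+1))`. -/
theorem kernel_complexity_poly_decay (C α : ℝ) (hC : 0 < C) (hα : 1 / 2 < α) :
    ∃ Cα C'α : ℝ, 0 < Cα ∧ 0 < C'α ∧
      ∀ (n : ℕ), 0 < n → ∀ (μ : ℕ → ℝ), (∀ j, 0 ≤ μ j) → Antitone μ → Summable μ →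
      (∀ j : ℕ, 1 ≤ j → μ j ≤ C * (j : ℝ) ^ (-(2 * α))) →
      ∀ (R : ℝ → ℝ), (∀ δ : ℝ, R δ = Real.sqrt ((n : ℝ)⁻¹ * ∑' j, min δ (μ j))) →
      (∀ δ : ℝ, 0 < δ → δ ≤ 1 / Real.sqrt n →
        R δ ^ 2 ≤ Cα * δ ^ ((2 * α - 1) / (2 * α)) / n) ∧
      (∀ δn : ℝ, 0 < δn → R δn = δn → δn ≤ C'α * (n : ℝ) ^ (-(2 * α) / (2 * α + 1))) := by
  have hp : 1 < 2 * α := by linarith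
  have hK : 1 ≤ 3 + C / (2 * α - 1) := by
    have : 0 ≤ C / (2 * α - 1) := div_nonneg hC.le (by linarith)
    linarith
  refine ⟨3 + C / (2 * α - 1), 3 + C / (2 * α - 1), by linarith, by linarith,
    fun n hn μ hμ0 _ hμ hdecay R hR => ?_⟩
  have hn1 : (1 : ℝ) ≤ n := by exact_mod_cast hn
  have hRsq : ∀ δ, 0 ≤ δ → R δ ^ 2 = (n : ℝ)⁻¹ * ∑' j, min δ (μ j) := fun δ hδ => by
    rw [hR, Real.sq_sqrt (mul_nonneg (by positivity) (tsum_nonneg fun j => le_min hδ (hμ0 j)))]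
  constructor
  · intro δ hδ hδn
    have hδ1 : δ ≤ 1 := hδn.trans (div_le_one_of_le₀ (Real.one_le_sqrt.2 hn1) (by positivity))
    rw [hRsq δ hδ.le, inv_mul_eq_div, div_le_div_iff_of_pos_right (by positivity)]
    exact tsum_min_le_rpow hp hC.le hμ0 hμ hdecay hδ hδ1
  · intro x hx hfix
    have hfp : (n : ℝ) * x ^ 2 = ∑' j, min x (μ j) := by
      have hsq := hRsq x hx.le
      rw [hfix] at hsq
      rw [hsq, mul_inv_cancel_left₀ (by positivity)]
    have hq1 : 2 * α / (2 * α + 1) ≤ 1 := div_le_one_of_le₀ (by linarith) (by positivity)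
    rw [neg_div]
    rcases le_total x 1 with hx1 | hx1
    · refine le_mul_rpow_neg_of_mul_sq_le_mul_rpow hx hn1 hK (by positivity) hq1 ?_
      have hexp : 2 - (2 * α / (2 * α + 1))⁻¹ = (2 * α - 1) / (2 * α) := by
        field_simp; ring
      rw [hexp, hfp]
      exact tsum_min_le_rpow hp hC.le hμ0 hμ hdecay hx hx1
    · exact le_mul_rpow_neg_of_mul_sq_le_mul hx hn1 (by linarith) hq1
        (hfp ▸ tsum_min_le_mul hp hC.le hμ0 hμ hdecay hx1)
end

section
/- Suppose μ_j ≤ exp(-γ j) for all j ≥ 1 with γ > 0. Then for any 0 < δ ≤ 1/√n, the statistical dimension d(δ) = max{j ≥ 0 : μ_j ≥ δ} satisfies d(δ) + 1 ≤ γ^{-1} log(C/δ) for some constant C, and the kernel complexity R(δ)² = n^{-1} Σ_j min{δ, μ_j} satisfies R(δ)² ≤ C'' (δ/n) log(1/δ); consequently the fixed point δ_n of R satisfies δ_n ≤ C''' (log n)/n. -/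
/-!
With `r = exp (-γ)`, the eigenvalues beyond index `J` are dominated by the geometric sequence
`exp (-γ (J + 1)) rⁱ`. Choosing `J ≈ γ⁻¹ log (1/δ)` makes that tail at most `δ / (1 - r)`, while the
`J + 1` head terms contribute at most `δ` each, so `∑ min δ μⱼ ≲ δ (γ⁻¹ log (1/δ) + 1)`.
At a fixed point `δₙ² = n⁻¹ ∑ min δₙ μⱼ` this reads `n δₙ ≲ γ⁻¹ log (1/δₙ) + 1`, and either
`δₙ ≤ 1/n` already or `log (1/δₙ) < log n`.
-/

open Real

section ExpDecay

variable {γ δ : ℝ} {μ : ℕ → ℝ}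

lemma inv_one_sub_exp_neg_pos (hγ : 0 < γ) : 0 < (1 - exp (-γ))⁻¹ :=
  inv_pos.mpr (sub_pos.mpr (exp_lt_one_iff.mpr (neg_lt_zero.mpr hγ)))

lemma exp_neg_mul_inv_mul_log (hγ : γ ≠ 0) {x : ℝ} (hx : 0 < x) :
    exp (-γ * (γ⁻¹ * log x)) = x⁻¹ := by
  rw [← mul_assoc, neg_mul, mul_inv_cancel₀ hγ, neg_one_mul, exp_neg, exp_log hx]

lemma natCast_add_one_le_inv_mul_log_of_le_exp (hγ : 0 < γ) (hδ : 0 < δ) {j : ℕ}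
    (h : δ ≤ exp (-γ * j)) : (j : ℝ) + 1 ≤ γ⁻¹ * log (exp γ / δ) := by
  have hlog : log δ ≤ -γ * j := (log_le_iff_le_exp hδ).mpr h
  rw [log_div (exp_ne_zero γ) hδ.ne', log_exp, le_inv_mul_iff₀ hγ]
  linarith

lemma tsum_min_le_of_exp_le (hγ : 0 < γ) (hμ0 : ∀ j, 0 ≤ μ j)
    (hdec : ∀ j : ℕ, 1 ≤ j → μ j ≤ exp (-γ * j)) (hδ : 0 ≤ δ) (J : ℕ)
    (hJ : exp (-γ * (J + 1)) ≤ δ) :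
    ∑' j, min δ (μ j) ≤ δ * (J + 1 + (1 - exp (-γ))⁻¹) := by
  have hr0 : 0 ≤ exp (-γ) := (exp_pos _).le
  have hr1 : exp (-γ) < 1 := exp_lt_one_iff.mpr (neg_lt_zero.mpr hγ)
  have hgeo : Summable (fun i : ℕ => δ * exp (-γ) ^ i) :=
    (summable_geometric_of_lt_one hr0 hr1).mul_left δ
  have htail_le (i : ℕ) : min δ (μ (i + (J + 1))) ≤ δ * exp (-γ) ^ i :=
    calc min δ (μ (i + (J + 1))) ≤ exp (-γ * ↑(i + (J + 1))) :=
          (min_le_right _ _).trans (hdec _ (by omega))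
      _ = exp (-γ) ^ i * exp (-γ * (J + 1)) := by
          rw [← exp_nat_mul, ← exp_add]; push_cast; ring_nf
      _ ≤ δ * exp (-γ) ^ i := by
          rw [mul_comm δ]; exact mul_le_mul_of_nonneg_left hJ (pow_nonneg hr0 _)
  have htail : Summable (fun i => min δ (μ (i + (J + 1)))) :=
    hgeo.of_nonneg_of_le (fun i => le_min hδ (hμ0 _)) htail_le
  have hhead : ∑ j ∈ Finset.range (J + 1), min δ (μ j) ≤ (J + 1) * δ := by
    simpa using Finset.sum_le_card_nsmul (Finset.range (J + 1)) _ δ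
      (fun j _ => min_le_left δ (μ j))
  have htail_sum := htail.tsum_le_tsum htail_le hgeo
  rw [tsum_mul_left, tsum_geometric_of_lt_one hr0 hr1] at htail_sum
  have hsum := (summable_nat_add_iff (f := fun j => min δ (μ j)) (J + 1)).mp htail
  rw [← hsum.sum_add_tsum_nat_add (J + 1)]
  linarith

lemma tsum_min_le_of_exp_neg_mul_le (hγ : 0 < γ) (hμ0 : ∀ j, 0 ≤ μ j)
    (hdec : ∀ j : ℕ, 1 ≤ j → μ j ≤ exp (-γ * j)) (hδ : 0 ≤ δ) {L : ℝ} (hL : 0 ≤ L)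
    (hLδ : exp (-γ * L) ≤ δ) :
    ∑' j, min δ (μ j) ≤ δ * (L + 2 + (1 - exp (-γ))⁻¹) := by
  have hJ : exp (-γ * (⌈L⌉₊ + 1)) ≤ δ :=
    (exp_le_exp.mpr (by nlinarith [Nat.le_ceil L])).trans hLδ
  refine (tsum_min_le_of_exp_le hγ hμ0 hdec hδ _ hJ).trans ?_
  exact mul_le_mul_of_nonneg_left (by linarith [Nat.ceil_lt_add_one hL]) hδ

end ExpDecay

section KernelComplexity

variable {γ δ : ℝ} {μ : ℕ → ℝ} {n : ℕ}

lemma quarter_le_log_one_div (hn : 2 ≤ n) (hδ : 0 < δ) (hδn : δ ≤ 1 / √n) :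
    1 / 4 ≤ log (1 / δ) := by
  have hsqrt : √n ≤ 1 / δ := (le_one_div hδ (by positivity)).mp hδn
  have hlog2 : log 2 ≤ log n := log_le_log (by norm_num) (by exact_mod_cast hn)
  calc (1 : ℝ) / 4 ≤ log n / 2 := by linarith [log_two_gt_d9]
    _ = log √n := (log_sqrt (Nat.cast_nonneg n)).symm
    _ ≤ log (1 / δ) := log_le_log (by positivity) hsqrt

lemma inv_mul_tsum_min_le_mul_log (hγ : 0 < γ) (hμ0 : ∀ j, 0 ≤ μ j)
    (hdec : ∀ j : ℕ, 1 ≤ j → μ j ≤ exp (-γ * j)) (hn : 2 ≤ n) (hδ : 0 < δ)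
    (hδn : δ ≤ 1 / √n) :
    (n : ℝ)⁻¹ * ∑' j, min δ (μ j) ≤
      (γ⁻¹ + 4 * (2 + (1 - exp (-γ))⁻¹)) * (δ / n) * log (1 / δ) := by
  set K := (1 - exp (-γ))⁻¹
  have hK : 0 < K := inv_one_sub_exp_neg_pos hγ
  have hlog := quarter_le_log_one_div hn hδ hδn
  have hexp : exp (-γ * (γ⁻¹ * log (1 / δ))) = δ := by
    rw [exp_neg_mul_inv_mul_log hγ.ne' (by positivity), one_div, inv_inv]
  have hS := tsum_min_le_of_exp_neg_mul_le hγ hμ0 hdec hδ.le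
    (by positivity : 0 ≤ γ⁻¹ * log (1 / δ)) hexp.le
  calc (n : ℝ)⁻¹ * ∑' j, min δ (μ j)
      ≤ (δ / n) * (γ⁻¹ * log (1 / δ) + 2 + K) := by
        rw [div_eq_inv_mul, mul_assoc]; gcongr
    _ ≤ (δ / n) * ((γ⁻¹ + 4 * (2 + K)) * log (1 / δ)) := by
        gcongr; nlinarith
    _ = _ := by ring

lemma le_mul_log_div_of_sq_eq (hγ : 0 < γ) (hμ0 : ∀ j, 0 ≤ μ j)
    (hdec : ∀ j : ℕ, 1 ≤ j → μ j ≤ exp (-γ * j)) (hn : 2 ≤ n) (hδ : 0 < δ)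
    (hfix : δ ^ 2 = (n : ℝ)⁻¹ * ∑' j, min δ (μ j)) :
    δ ≤ (γ⁻¹ + 2 * (2 + (1 - exp (-γ))⁻¹)) * log n / n := by
  set K := (1 - exp (-γ))⁻¹
  have hK : 0 < K := inv_one_sub_exp_neg_pos hγ
  have hn0 : (0 : ℝ) < n := by positivity
  have hlogn : 1 / 2 < log n := by
    have := log_le_log (by norm_num) (by exact_mod_cast hn : (2 : ℝ) ≤ n)
    linarith [log_two_gt_d9]
  rw [le_div_iff₀ hn0]
  rcases le_or_gt δ (1 / n) with hsmall | hlarge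
  · have : δ * n ≤ 1 := by rwa [le_div_iff₀ hn0] at hsmall
    nlinarith [inv_pos.mpr hγ]
  · have hexp : exp (-γ * (γ⁻¹ * log n)) ≤ δ := by
      rw [← mul_assoc, neg_mul, mul_inv_cancel₀ hγ.ne', neg_one_mul, exp_neg, exp_log hn0]
      simpa using hlarge.le
    have hS := tsum_min_le_of_exp_neg_mul_le hγ hμ0 hdec hδ.le
      (by positivity : 0 ≤ γ⁻¹ * log n) hexp
    have hnδ : δ * n ≤ γ⁻¹ * log n + 2 + K := by
      have : n * δ ^ 2 ≤ δ * (γ⁻¹ * log n + 2 + K) := by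
        rw [hfix, ← mul_assoc, mul_inv_cancel₀ hn0.ne', one_mul]; exact hS
      nlinarith
    nlinarith

end KernelComplexity

/-- Exponentially decaying eigenvalues: if `μ j ≤ exp (-γ j)` for all `j ≥ 1` with `γ > 0`,
then there are constants `C, C'', C''' > 0` (depending only on `γ`) such that for any
`0 < δ ≤ 1/√n`: the statistical dimension bound `j + 1 ≤ γ⁻¹ log (C/δ)` holds for every
`j ≥ 1` with `μ j ≥ δ`, and `R(δ)² = n⁻¹ ∑ min δ (μ j) ≤ C'' (δ/n) log (1/δ)`;
consequently any positive fixed point `δₙ` of `R` satisfies `δₙ ≤ C''' (log n)/n`. -/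
theorem kernel_complexity_exp_decay (γ : ℝ) (hγ : 0 < γ) :
    ∃ C C'' C''' : ℝ, 0 < C ∧ 0 < C'' ∧ 0 < C''' ∧
      ∀ (n : ℕ), 2 ≤ n → ∀ (μ : ℕ → ℝ), (∀ j, 0 ≤ μ j) → Antitone μ → Summable μ →
      (∀ j : ℕ, 1 ≤ j → μ j ≤ Real.exp (-γ * j)) →
      ∀ (R : ℝ → ℝ), (∀ δ : ℝ, R δ = Real.sqrt ((n : ℝ)⁻¹ * ∑' j, min δ (μ j))) →
      (∀ δ : ℝ, 0 < δ → δ ≤ 1 / Real.sqrt n →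
        (∀ j : ℕ, 1 ≤ j → δ ≤ μ j → (j : ℝ) + 1 ≤ γ⁻¹ * Real.log (C / δ)) ∧
        R δ ^ 2 ≤ C'' * (δ / n) * Real.log (1 / δ)) ∧
      (∀ δn : ℝ, 0 < δn → R δn = δn → δn ≤ C''' * Real.log n / n) := by
  have hK := inv_one_sub_exp_neg_pos hγ
  refine ⟨exp γ, γ⁻¹ + 4 * (2 + (1 - exp (-γ))⁻¹), γ⁻¹ + 2 * (2 + (1 - exp (-γ))⁻¹),
    exp_pos γ, by positivity, by positivity, fun n hn μ hμ0 _ _ hdec R hR => ?_⟩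
  have hRsq (δ : ℝ) (hδ : 0 ≤ δ) : R δ ^ 2 = (n : ℝ)⁻¹ * ∑' j, min δ (μ j) := by
    rw [hR, sq_sqrt]
    exact mul_nonneg (by positivity) (tsum_nonneg fun j => le_min hδ (hμ0 j))
  refine ⟨fun δ hδ hδn => ⟨fun j hj hδj => ?_, ?_⟩, fun δn hδn hfix => ?_⟩
  · exact natCast_add_one_le_inv_mul_log_of_le_exp hγ hδ (hδj.trans (hdec j hj))
  · rw [hRsq δ hδ.le]
    exact inv_mul_tsum_min_le_mul_log hγ hμ0 hdec hn hδ hδn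
  · exact le_mul_log_div_of_sq_eq hγ hμ0 hdec hn hδn
      (by simpa only [hfix] using hRsq δn hδn.le)
end

section
/- Let Φ_1, ..., Φ_n and Φ̂_1, ..., Φ̂_n be elements of ℓ², set Σ = n^{-1} Σ_i Φ_i Φ_i^⊤, δ > 0, and Δ̄ = n^{-1} Σ_i ‖Φ̂_i - Φ_i‖². Then the operator T₁(δ) = n^{-1} Σ_i (Σ + δI)^{-1/2} Φ_i (Φ̂_i - Φ_i)^⊤ (Σ + δI)^{-1/2} satisfies ‖T₁(δ)‖_op ≤ √(Δ̄/δ), and the operator T₂(δ) = n^{-1} Σ_i (Σ + δI)^{-1/2} (Φ̂_i - Φ_i)(Φ̂_i - Φ_i)^⊤ (Σ + δI)^{-1/2} satisfies ‖T₂(δ)‖_op ≤ Δ̄/δ and Tr(T₂(δ)) ≤ Δ̄/δ. -/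
/-!
For symmetric `S` with `S (Σ + δ) S = 1`, every `u` satisfies
`⟪S u, Σ (S u)⟫ + δ ‖S u‖² = ‖u‖²`, so `δ ‖S u‖² ≤ ‖u‖²` and `n⁻¹ ∑ᵢ ⟪Φᵢ, S u⟫² ≤ ‖u‖²`.
Both `T₁` and `T₂` have the form `v ↦ c ∑ᵢ ⟪bᵢ, v⟫ aᵢ`, whose bilinear form is bounded, by
Cauchy–Schwarz over `i`, by the square roots of the quadratic forms `c ∑ᵢ ⟪aᵢ, ·⟫²` and
`c ∑ᵢ ⟪bᵢ, ·⟫²`. For `T₁` these are bounded by `‖·‖²` and `(Δ̄/δ) ‖·‖²`, for `T₂` both by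
`(Δ̄/δ) ‖·‖²`.
-/

open scoped RealInnerProductSpace
open Finset

section

variable {E : Type*} [NormedAddCommGroup E] [InnerProductSpace ℝ E]

theorem mul_mul_eq_one_of_mul_self_mul_eq_one {M : Type*} [Monoid M] {s a : M}
    (h₁ : s * s * a = 1) (h₂ : a * (s * s) = 1) : s * a * s = 1 := by
  have hcomm : a * s = s * a :=
    left_inv_eq_right_inv (by rw [mul_assoc, h₂]) (by rw [← mul_assoc, h₁])
  rw [mul_assoc, hcomm, ← mul_assoc, h₁]

theorem inner_apply_apply_eq_norm_sq_of_mul_mul_eq_one {S A : E →L[ℝ] E}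
    (hS : (S : E →ₗ[ℝ] E).IsSymmetric) (hSAS : S * A * S = 1) (u : E) :
    ⟪S u, A (S u)⟫ = ‖u‖ ^ 2 := by
  have hu : S (A (S u)) = u := by simpa using congr($hSAS u)
  calc ⟪S u, A (S u)⟫ = ⟪u, S (A (S u))⟫ := hS u (A (S u))
    _ = ‖u‖ ^ 2 := by rw [hu, real_inner_self_eq_norm_sq]

theorem inner_apply_add_mul_norm_sq_eq_norm_sq {S Sig : E →L[ℝ] E} {δ : ℝ}
    (hS : (S : E →ₗ[ℝ] E).IsSymmetric) (hSAS : S * (Sig + δ • 1) * S = 1) (u : E) :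
    ⟪S u, Sig (S u)⟫ + δ * ‖S u‖ ^ 2 = ‖u‖ ^ 2 := by
  rw [← inner_apply_apply_eq_norm_sq_of_mul_mul_eq_one hS hSAS u, add_apply, smul_apply,
    one_apply_eq_self, inner_add_right, real_inner_smul_right, real_inner_self_eq_norm_sq]

theorem inner_self_apply_eq_mul_sum_sq {ι : Type*} [Fintype ι] {Sig : E →L[ℝ] E} {Φ : ι → E}
    {c : ℝ} (hSig : ∀ v, Sig v = c • ∑ i, ⟪Φ i, v⟫ • Φ i) (w : E) :
    ⟪w, Sig w⟫ = c * ∑ i, ⟪Φ i, w⟫ ^ 2 := by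
  simp only [hSig, real_inner_smul_right, inner_sum, sq, real_inner_comm w]

theorem mul_sum_sq_inner_le {ι : Type*} [Fintype ι] {c : ℝ} (hc : 0 ≤ c) (x : ι → E) (v : E) :
    c * ∑ i, ⟪x i, v⟫ ^ 2 ≤ (c * ∑ i, ‖x i‖ ^ 2) * ‖v‖ ^ 2 := by
  rw [mul_assoc, sum_mul]
  gcongr with i
  rw [← mul_pow]
  exact sq_le_sq' (neg_le_of_abs_le (abs_real_inner_le_norm _ _)) (real_inner_le_norm _ _)

theorem opNorm_le_sqrt_mul_sqrt_of_sum_sq_inner_le {ι : Type*} [Fintype ι] {T : E →L[ℝ] E}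
    {a b : ι → E} {c α β : ℝ} (hc : 0 ≤ c) (hT : ∀ v, T v = c • ∑ i, ⟪b i, v⟫ • a i)
    (ha : ∀ u, c * ∑ i, ⟪a i, u⟫ ^ 2 ≤ α * ‖u‖ ^ 2)
    (hb : ∀ v, c * ∑ i, ⟪b i, v⟫ ^ 2 ≤ β * ‖v‖ ^ 2) : ‖T‖ ≤ √α * √β := by
  refine ContinuousLinearMap.opNorm_le_of_re_inner_le (by positivity) fun v u hv hu => ?_
  have hrescale : ∀ (f : ι → E) (w : E), ∑ i, (√c * ⟪f i, w⟫) ^ 2 = c * ∑ i, ⟪f i, w⟫ ^ 2 := by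
    intro f w
    simp only [mul_pow, Real.sq_sqrt hc, mul_sum]
  calc RCLike.re ⟪T v, u⟫ = ∑ i, (√c * ⟪b i, v⟫) * (√c * ⟪a i, u⟫) := by
        simp only [RCLike.re_to_real, hT, real_inner_smul_left, sum_inner, mul_sum]
        refine sum_congr rfl fun i _ => ?_
        rw [mul_mul_mul_comm, Real.mul_self_sqrt hc]
    _ ≤ √(∑ i, (√c * ⟪b i, v⟫) ^ 2) * √(∑ i, (√c * ⟪a i, u⟫) ^ 2) :=
        Real.sum_mul_le_sqrt_mul_sqrt _ _ _
    _ ≤ √β * √α := by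
        rw [hrescale, hrescale]
        gcongr
        · simpa [hv] using hb v
        · simpa [hu] using ha u
    _ = √α * √β := mul_comm _ _

end

/-- `S` stands for `(Sig + δ I)^{-1/2}` through `S² = (Sig + δ I)⁻¹`, and the trace of `T₂` is
written out as `n⁻¹ ∑ᵢ ‖S (Φ'ᵢ - Φᵢ)‖²`. -/
theorem perturbation_operator_bounds_general {E : Type*} [NormedAddCommGroup E]
    [InnerProductSpace ℝ E]
    (n : ℕ) (Φ Φ' : Fin n → E) (δ : ℝ) (hδ : 0 < δ)
    (Sig S T₁ T₂ : E →L[ℝ] E)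
    (hSig : ∀ v : E, Sig v = (n : ℝ)⁻¹ • ∑ i, ⟪Φ i, v⟫ • Φ i)
    (hSsa : ∀ u v : E, ⟪S u, v⟫ = ⟪u, S v⟫)
    (hS1 : (S * S) * (Sig + δ • 1) = 1)
    (hS2 : (Sig + δ • 1) * (S * S) = 1)
    (Δbar : ℝ) (hΔ : Δbar = (n : ℝ)⁻¹ * ∑ i, ‖Φ' i - Φ i‖ ^ 2)
    (hT₁ : ∀ v : E, T₁ v = (n : ℝ)⁻¹ • ∑ i, ⟪Φ' i - Φ i, S v⟫ • S (Φ i))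
    (hT₂ : ∀ v : E, T₂ v = (n : ℝ)⁻¹ • ∑ i, ⟪Φ' i - Φ i, S v⟫ • S (Φ' i - Φ i)) :
    ‖T₁‖ ≤ Real.sqrt (Δbar / δ) ∧ ‖T₂‖ ≤ Δbar / δ ∧
    (n : ℝ)⁻¹ * ∑ i, ‖S (Φ' i - Φ i)‖ ^ 2 ≤ Δbar / δ := by
  have hS : (S : E →ₗ[ℝ] E).IsSymmetric := hSsa
  have hSAS := mul_mul_eq_one_of_mul_self_mul_eq_one hS1 hS2
  have hc : 0 ≤ (n : ℝ)⁻¹ := by positivity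
  have hSig_nonneg (w : E) : 0 ≤ ⟪w, Sig w⟫ := by
    rw [inner_self_apply_eq_mul_sum_sq hSig]; positivity
  have htrace : (n : ℝ)⁻¹ * ∑ i, ‖S (Φ' i - Φ i)‖ ^ 2 ≤ Δbar / δ := by
    rw [hΔ, mul_div_assoc, sum_div]
    gcongr with i
    rw [le_div_iff₀' hδ, ← inner_apply_add_mul_norm_sq_eq_norm_sq hS hSAS (Φ' i - Φ i)]
    exact le_add_of_nonneg_left (hSig_nonneg _)
  have hΦ (u : E) : (n : ℝ)⁻¹ * ∑ i, ⟪S (Φ i), u⟫ ^ 2 ≤ 1 * ‖u‖ ^ 2 := by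
    simp_rw [hSsa _ u]
    rw [← inner_self_apply_eq_mul_sum_sq hSig, one_mul,
      ← inner_apply_add_mul_norm_sq_eq_norm_sq hS hSAS u]
    exact le_add_of_nonneg_right (by positivity)
  have hdiff (v : E) : (n : ℝ)⁻¹ * ∑ i, ⟪S (Φ' i - Φ i), v⟫ ^ 2 ≤ Δbar / δ * ‖v‖ ^ 2 :=
    (mul_sum_sq_inner_le hc _ v).trans (by gcongr)
  have hT₁' (v : E) : T₁ v = (n : ℝ)⁻¹ • ∑ i, ⟪S (Φ' i - Φ i), v⟫ • S (Φ i) := by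
    simp only [hT₁, hSsa _ v]
  have hT₂' (v : E) : T₂ v = (n : ℝ)⁻¹ • ∑ i, ⟪S (Φ' i - Φ i), v⟫ • S (Φ' i - Φ i) := by
    simp only [hT₂, hSsa _ v]
  refine ⟨?_, ?_, htrace⟩
  · simpa using opNorm_le_sqrt_mul_sqrt_of_sum_sq_inner_le hc hT₁' hΦ hdiff
  · have hΔδ : 0 ≤ Δbar / δ := by rw [hΔ]; positivity
    simpa [Real.mul_self_sqrt hΔδ] using
      opNorm_le_sqrt_mul_sqrt_of_sum_sq_inner_le hc hT₂' hdiff hdiff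

/-- Operator norm bounds for the perturbation terms. With `Sig = n⁻¹ ∑ᵢ Φᵢ Φᵢᵀ`,
`S = (Sig + δI)^{-1/2}` (characterized as the positive self-adjoint operator with
`S² = (Sig + δI)⁻¹`), `Δ̄ = n⁻¹ ∑ᵢ ‖Φ'ᵢ - Φᵢ‖²`, and
`T₁ = n⁻¹ ∑ᵢ S Φᵢ (Φ'ᵢ - Φᵢ)ᵀ S`, `T₂ = n⁻¹ ∑ᵢ S (Φ'ᵢ - Φᵢ)(Φ'ᵢ - Φᵢ)ᵀ S`, one has
`‖T₁‖ ≤ √(Δ̄/δ)`, `‖T₂‖ ≤ Δ̄/δ`, and `Tr T₂ = n⁻¹ ∑ᵢ ‖S(Φ'ᵢ - Φᵢ)‖² ≤ Δ̄/δ`. -/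
theorem perturbation_operator_bounds {E : Type*} [NormedAddCommGroup E]
    [InnerProductSpace ℝ E] [CompleteSpace E]
    (n : ℕ) (hn : 0 < n) (Φ Φ' : Fin n → E) (δ : ℝ) (hδ : 0 < δ)
    (Sig S T₁ T₂ : E →L[ℝ] E)
    (hSig : ∀ v : E, Sig v = (n : ℝ)⁻¹ • ∑ i, ⟪Φ i, v⟫ • Φ i)
    (hSsa : ∀ u v : E, ⟪S u, v⟫ = ⟪u, S v⟫)
    (hSpos : ∀ v : E, 0 ≤ ⟪S v, v⟫)
    (hS1 : (S * S) * (Sig + δ • 1) = 1)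
    (hS2 : (Sig + δ • 1) * (S * S) = 1)
    (Δbar : ℝ) (hΔ : Δbar = (n : ℝ)⁻¹ * ∑ i, ‖Φ' i - Φ i‖ ^ 2)
    (hT₁ : ∀ v : E, T₁ v = (n : ℝ)⁻¹ • ∑ i, ⟪Φ' i - Φ i, S v⟫ • S (Φ i))
    (hT₂ : ∀ v : E, T₂ v = (n : ℝ)⁻¹ • ∑ i, ⟪Φ' i - Φ i, S v⟫ • S (Φ' i - Φ i)) :
    ‖T₁‖ ≤ Real.sqrt (Δbar / δ) ∧ ‖T₂‖ ≤ Δbar / δ ∧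
    (n : ℝ)⁻¹ * ∑ i, ‖S (Φ' i - Φ i)‖ ^ 2 ≤ Δbar / δ :=
  perturbation_operator_bounds_general n Φ Φ' δ hδ Sig S T₁ T₂ hSig hSsa hS1 hS2 Δbar hΔ hT₁ hT₂
end
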